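/- arXiv:2006.07710 — 3 statements merged into one kernel-verified Lean document; each statement's English description precedes it below -/
import Mathlib

section
/- Let k be even, v ∈ ℝ^k have exactly k/2 entries equal to 1/√k and k/2 entries equal to −1/√k, let t be a nonnegative integer, η > 0, and 0 < γ ≤ η/(8√k). Let x ∈ ℝ^d and y ∈ {−1,1}, and suppose the hidden weight columns w_1, …, w_k ∈ ℝ^d satisfy |w_i · x − t η v_i y / 2| ≤ γ for every i ∈ [k]. Then the network output f(x) = Σ_{i=1}^k v_i ReLU(w_i · x) satisfies |y f(x) − t η/4| ≤ γ √k. Moreover, if t ≥ 1 then every hidden unit i with y v_i < 0 is inactive (w_i · x < 0). -/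
noncomputable section

def relu (z : ℝ) : ℝ := max z 0

/-- Output weights: exactly `k/2` entries equal to `1/√k` and `k/2` entries `-1/√k`. -/
def balancedSigns (k : ℕ) (v : Fin k → ℝ) : Prop :=
  (Finset.univ.filter fun i => v i = 1 / Real.sqrt k).card = k / 2 ∧
  (Finset.univ.filter fun i => v i = -(1 / Real.sqrt k)).card = k / 2 ∧
  ∀ i, v i = 1 / Real.sqrt k ∨ v i = -(1 / Real.sqrt k)

/-!
Each preactivation `wᵢ·x` lies within `γ` of its target `c · y vᵢ` with `c = tη/2`, and ReLU is
1-Lipschitz, so `y f(x)` lies within `k · (1/√k) · γ = γ√k` of its value at the targets. At the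
targets only the `k/2` units with `y vᵢ = 1/√k` are active, each contributing `c/k`, for a total
of `c/2 = tη/4`. A unit with `y vᵢ = -1/√k` has preactivation at most `-tη/(2√k) + γ < 0`.
-/

open Finset

lemma relu_of_nonneg {z : ℝ} (hz : 0 ≤ z) : relu z = z := max_eq_left hz

lemma relu_of_nonpos {z : ℝ} (hz : z ≤ 0) : relu z = 0 := max_eq_right hz

lemma abs_relu_sub_relu_le (a b : ℝ) : |relu a - relu b| ≤ |a - b| := by
  simpa only [relu] using abs_max_sub_max_le_abs a b 0

lemma abs_sum_mul_relu_sub_sum_mul_relu_le {ι : Type*} (s : Finset ι) (c a b : ι → ℝ)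
    {C γ : ℝ} (hc : ∀ i ∈ s, |c i| ≤ C) (hab : ∀ i ∈ s, |a i - b i| ≤ γ) :
    |∑ i ∈ s, c i * relu (a i) - ∑ i ∈ s, c i * relu (b i)| ≤ #s * (C * γ) := by
  rw [← sum_sub_distrib]
  calc |∑ i ∈ s, (c i * relu (a i) - c i * relu (b i))|
      ≤ ∑ i ∈ s, |c i * relu (a i) - c i * relu (b i)| := abs_sum_le_sum_abs _ _
    _ ≤ ∑ _i ∈ s, C * γ := sum_le_sum fun i hi => by
        rw [← mul_sub, abs_mul]
        exact mul_le_mul (hc i hi) ((abs_relu_sub_relu_le _ _).trans (hab i hi))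
          (abs_nonneg _) ((abs_nonneg _).trans (hc i hi))
    _ = #s * (C * γ) := by rw [sum_const, nsmul_eq_mul]

namespace balancedSigns

variable {k : ℕ} {v : Fin k → ℝ}

lemma neg (hv : balancedSigns k v) : balancedSigns k fun i => -v i := by
  obtain ⟨hpos, hneg, hpm⟩ := hv
  refine ⟨?_, ?_, fun i => ?_⟩
  · simpa only [neg_eq_iff_eq_neg] using hneg
  · simpa only [neg_inj] using hpos
  · rcases hpm i with h | h <;> simp [h]

lemma mul_left (hv : balancedSigns k v) {y : ℝ} (hy : y = 1 ∨ y = -1) :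
    balancedSigns k fun i => y * v i := by
  rcases hy with rfl | rfl
  · simpa only [one_mul] using hv
  · simpa only [neg_one_mul] using hv.neg

lemma abs_apply (hv : balancedSigns k v) (i : Fin k) : |v i| = 1 / √k := by
  rcases hv.2.2 i with h | h <;> rw [h] <;> simp

lemma eq_neg_of_neg (hv : balancedSigns k v) {i : Fin k} (hi : v i < 0) : v i = -(1 / √k) :=
  (hv.2.2 i).resolve_left fun h => by rw [h] at hi; exact hi.not_ge (by positivity)

/-- Only the `k/2` positive units are active, each contributing `c · (1/√k)² = c/k`. -/
lemma sum_mul_relu_const_mul (hv : balancedSigns k v) (hk : Even k) (hk0 : 0 < k)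
    {c : ℝ} (hc : 0 ≤ c) : ∑ i, v i * relu (c * v i) = c / 2 := by
  have hs : 0 < 1 / √(k : ℝ) := by positivity
  have hsq : (1 / √(k : ℝ)) ^ 2 = 1 / k := by
    rw [div_pow, one_pow, Real.sq_sqrt (Nat.cast_nonneg k)]
  have hterm : ∀ i, v i * relu (c * v i) = if v i = 1 / √k then c / k else 0 := by
    intro i
    rcases hv.2.2 i with h | h
    · rw [if_pos h, h, relu_of_nonneg (by positivity)]
      linear_combination c * hsq
    · rw [if_neg fun h' => by linarith, h, relu_of_nonpos (by nlinarith), mul_zero]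
  obtain ⟨m, rfl⟩ := hk
  rw [sum_congr rfl fun i _ => hterm i, ← sum_filter, sum_const, hv.1,
    show (m + m) / 2 = m by omega, nsmul_eq_mul]
  have hm : (m : ℝ) ≠ 0 := by exact_mod_cast (by omega : m ≠ 0)
  push_cast
  field_simp
  ring

end balancedSigns

theorem network_output_from_preactivations_general (k d : ℕ) (hk : Even k)
    (v : Fin k → ℝ) (hv : balancedSigns k v)
    (t : ℕ) (η γ : ℝ) (hγ0 : 0 < γ)
    (hγ : γ ≤ η / (8 * Real.sqrt k))
    (x : Fin d → ℝ) (y : ℝ) (hy : y = 1 ∨ y = -1)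
    (w : Fin k → Fin d → ℝ)
    (hw : ∀ i, |(∑ l, w i l * x l) - (t : ℝ) * η * v i * y / 2| ≤ γ) :
    |y * (∑ i, v i * relu (∑ l, w i l * x l)) - (t : ℝ) * η / 4| ≤ γ * Real.sqrt k ∧
    (1 ≤ t → ∀ i, y * v i < 0 → (∑ l, w i l * x l) < 0) := by
  obtain ⟨hη, hs⟩ : 0 < η ∧ 0 < √(k : ℝ) := by
    obtain ⟨hη, hs8⟩ := (div_pos_iff.mp (hγ0.trans_le hγ)).resolve_right
      fun h => h.2.not_ge (by positivity)
    exact ⟨hη, by linarith⟩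
  have hu : balancedSigns k fun i => y * v i := hv.mul_left hy
  set c : ℝ := t * η / 2
  have hw' : ∀ i, |(∑ l, w i l * x l) - c * (y * v i)| ≤ γ := fun i => by
    convert hw i using 3; ring
  constructor
  · have hcenter : ∑ i, y * v i * relu (c * (y * v i)) = t * η / 4 := by
      rw [hu.sum_mul_relu_const_mul hk (Nat.cast_pos.mp (Real.sqrt_pos.mp hs)) (by positivity)]
      ring
    rw [mul_sum, ← hcenter]
    simp only [← mul_assoc y]
    calc _ ≤ #(univ : Finset (Fin k)) * (1 / √k * γ) :=
          abs_sum_mul_relu_sub_sum_mul_relu_le _ _ _ _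
            (fun i _ => (hu.abs_apply i).le) (fun i _ => hw' i)
      _ = γ * √k := by
        rw [card_univ, Fintype.card_fin]
        field_simp
        exact (Real.sq_sqrt (Nat.cast_nonneg k)).symm
  · intro ht i hi
    have hγc : γ < c * (1 / √k) :=
      calc γ ≤ η / 8 * (1 / √k) := by rwa [div_mul_div_comm, mul_one]
        _ < c * (1 / √k) := by
          refine mul_lt_mul_of_pos_right ?_ (one_div_pos.mpr hs)
          have ht1 : (1 : ℝ) ≤ t := by exact_mod_cast ht
          show η / 8 < t * η / 2
          nlinarith
    have hle := (abs_le.mp (hw' i)).2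
    rw [hu.eq_neg_of_neg hi] at hle
    linarith

/-- if every hidden unit's preactivation satisfies
`|wᵢ·x − tηvᵢy/2| ≤ γ` with `γ ≤ η/(8√k)`, then `|y f(x) − tη/4| ≤ γ√k`, and for
`t ≥ 1` every unit with `y vᵢ < 0` is inactive. -/
theorem network_output_from_preactivations (k d : ℕ) (hk : Even k)
    (v : Fin k → ℝ) (hv : balancedSigns k v)
    (t : ℕ) (η γ : ℝ) (hη : 0 < η) (hγ0 : 0 < γ)
    (hγ : γ ≤ η / (8 * Real.sqrt k))
    (x : Fin d → ℝ) (y : ℝ) (hy : y = 1 ∨ y = -1)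
    (w : Fin k → Fin d → ℝ)
    (hw : ∀ i, |(∑ l, w i l * x l) - (t : ℝ) * η * v i * y / 2| ≤ γ) :
    |y * (∑ i, v i * relu (∑ l, w i l * x l)) - (t : ℝ) * η / 4| ≤ γ * Real.sqrt k ∧
    (1 ≤ t → ∀ i, y * v i < 0 → (∑ l, w i l * x l) < 0) :=
  network_output_from_preactivations_general k d hk v hv t η γ hγ0 hγ x y hy w hw

end
end

section
/- Fix α > 2, η > 0, ĉ = η/4, c₀ = 2, and C_t = c₀(1+ĉ)^t for a nonnegative integer t, and suppose d ≥ 3 and log d ≥ 1. Let the hidden weight column w_i ∈ ℝ^d satisfy |w_{1i} − t η v_i/2| ≤ C_t/(√(dk) log d), |w_{2i}| ≤ C_t/(√(dk) log d), and ‖w̄_i‖ ≤ C_t/(√k log d). Let (x, y) be any point with x₁ = y ∈ {−1, 1}, x₂ ∈ {−1, 0, 1} with x₂ = 0 whenever y = −1, and whose noise block satisfies |w̄_i · x̄| ≤ ‖w̄_i‖ √(8 α log d). Then |w_i · x − t η v_i y / 2| ≤ 5√α·C_t / √(k log d). -/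
noncomputable section

/-- Euclidean norm of the noise block (coordinates `i ≥ 2`) of `w`. -/
def noiseNorm (d : ℕ) (w : Fin d → ℝ) : ℝ :=
  Real.sqrt (∑ i ∈ Finset.univ.filter (fun i : Fin d => 2 ≤ (i : ℕ)), w i ^ 2)

/-- Inner product of the noise blocks (coordinates `i ≥ 2`) of `w` and `x`. -/
def noiseDot (d : ℕ) (w x : Fin d → ℝ) : ℝ :=
  ∑ i ∈ Finset.univ.filter (fun i : Fin d => 2 ≤ (i : ℕ)), w i * x i

/-- under the inductive weight bounds with `C_t = c₀(1+ĉ)^t`, for an LSN-type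
point `(x, y)` whose noise block satisfies `|w̄·x̄| ≤ ‖w̄‖√(8α log d)`, the preactivation
satisfies `|w·x − tηvy/2| ≤ 5√α C_t / √(k log d)`. -/
theorem preactivation_bound (d k : ℕ) (hd : 3 ≤ d) (hk : 0 < k)
    (hlog : 1 ≤ Real.log d) (α η : ℝ) (hα : 2 < α) (hη : 0 < η) (t : ℕ)
    (v : ℝ) (hv : v = 1 / Real.sqrt k ∨ v = -(1 / Real.sqrt k))
    (w x : Fin d → ℝ) (y : ℝ) (hy : y = 1 ∨ y = -1)
    (Ct : ℝ) (hCt : Ct = 2 * (1 + η / 4) ^ t)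
    (hw1 : |w ⟨0, by omega⟩ - (t : ℝ) * η * v / 2| ≤ Ct / (Real.sqrt (d * k) * Real.log d))
    (hw2 : |w ⟨1, by omega⟩| ≤ Ct / (Real.sqrt (d * k) * Real.log d))
    (hw3 : noiseNorm d w ≤ Ct / (Real.sqrt k * Real.log d))
    (hx0 : x ⟨0, by omega⟩ = y)
    (hx1 : x ⟨1, by omega⟩ = 1 ∨ x ⟨1, by omega⟩ = 0 ∨ x ⟨1, by omega⟩ = -1)
    (hx1' : y = -1 → x ⟨1, by omega⟩ = 0)
    (hxnoise : |noiseDot d w x| ≤ noiseNorm d w * Real.sqrt (8 * α * Real.log d)) :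
    |(∑ l, w l * x l) - (t : ℝ) * η * v * y / 2| ≤
      5 * Real.sqrt α * Ct / Real.sqrt (k * Real.log d) := by
  have hd0 : (3:ℝ) ≤ d := by exact_mod_cast hd
  have hk0 : (0:ℝ) < k := by exact_mod_cast hk
  set L := Real.log d with hLdef
  have hL0 : (0:ℝ) < L := lt_of_lt_of_le one_pos hlog
  set sk := Real.sqrt k with hskdef
  set sL := Real.sqrt L with hsLdef
  have hsk0 : 0 < sk := Real.sqrt_pos.mpr hk0
  have hsL1 : 1 ≤ sL := by
    rw [hsLdef, show (1:ℝ) = Real.sqrt 1 by simp]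
    exact Real.sqrt_le_sqrt hlog
  have hsL0 : 0 < sL := lt_of_lt_of_le one_pos hsL1
  have hsLsq : sL * sL = L := Real.mul_self_sqrt hL0.le
  have hsLleL : sL ≤ L := by
    rw [hsLdef]
    exact (Real.sqrt_le_left hL0.le).mpr (by nlinarith)
  have hCt0 : 0 < Ct := by rw [hCt]; positivity
  have hsdk : sk ≤ Real.sqrt (d * k) := by
    apply Real.sqrt_le_sqrt; nlinarith
  have hsdk0 : 0 < Real.sqrt (d * k) := lt_of_lt_of_le hsk0 hsdk
  -- split the sum
  have hne : (⟨0, by omega⟩ : Fin d) ≠ ⟨1, by omega⟩ := by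
    simp [Fin.ext_iff]
  have hfilt : Finset.univ.filter (fun i : Fin d => ¬ 2 ≤ (i : ℕ)) =
      {(⟨0, by omega⟩ : Fin d), ⟨1, by omega⟩} := by
    ext i
    simp [Fin.ext_iff]
    omega
  have hsplit : (∑ l, w l * x l) =
      w ⟨0, by omega⟩ * x ⟨0, by omega⟩ + w ⟨1, by omega⟩ * x ⟨1, by omega⟩
        + noiseDot d w x := by
    rw [noiseDot,
      ← Finset.sum_filter_add_sum_filter_not Finset.univ (fun i : Fin d => 2 ≤ (i : ℕ))
        (fun l => w l * x l), hfilt, Finset.sum_pair hne]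
    ring
  have hy1 : |y| = 1 := by rcases hy with h | h <;> simp [h]
  have hx1abs : |x ⟨1, by omega⟩| ≤ 1 := by
    rcases hx1 with h | h | h <;> simp [h]
  -- term bounds
  have hterm0 : |w ⟨0, by omega⟩ * x ⟨0, by omega⟩ - (t : ℝ) * η * v * y / 2|
      ≤ Ct / (Real.sqrt (d * k) * L) := by
    have : w ⟨0, by omega⟩ * x ⟨0, by omega⟩ - (t : ℝ) * η * v * y / 2
        = (w ⟨0, by omega⟩ - (t : ℝ) * η * v / 2) * y := by rw [hx0]; ring
    rw [this, abs_mul, hy1, mul_one]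
    exact hw1
  have hterm1 : |w ⟨1, by omega⟩ * x ⟨1, by omega⟩| ≤ Ct / (Real.sqrt (d * k) * L) := by
    rw [abs_mul]
    calc |w ⟨1, by omega⟩| * |x ⟨1, by omega⟩| ≤ |w ⟨1, by omega⟩| * 1 := by
          exact mul_le_mul_of_nonneg_left hx1abs (abs_nonneg _)
      _ ≤ Ct / (Real.sqrt (d * k) * L) := by rw [mul_one]; exact hw2
  have hterm2 : |noiseDot d w x| ≤ (Ct / (sk * L)) * Real.sqrt (8 * α * L) := by
    exact hxnoise.trans (mul_le_mul_of_nonneg_right hw3 (Real.sqrt_nonneg _))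
  -- key scalar inequality
  have hα0 : (0:ℝ) ≤ α := by linarith
  set sa := Real.sqrt α with hsadef
  have hsa2 : sa * sa = α := Real.mul_self_sqrt hα0
  have hsa0 : 0 ≤ sa := Real.sqrt_nonneg _
  have hs8 : Real.sqrt (8 * α * L) = Real.sqrt (8 * α) * sL := by
    rw [hsLdef, ← Real.sqrt_mul (by positivity)]
  set s8 := Real.sqrt (8 * α) with hs8def
  have hs82 : s8 * s8 = 8 * α := Real.mul_self_sqrt (by positivity)
  have hs80 : 0 ≤ s8 := Real.sqrt_nonneg _
  have hsa1 : 1 ≤ sa := by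
    have := Real.sqrt_le_sqrt (show (1:ℝ) ≤ α by linarith)
    simpa [hsadef] using this
  have hs8le : s8 ≤ 3 * sa := by
    have h1 : s8 ≤ Real.sqrt (9 * α) :=
      Real.sqrt_le_sqrt (by linarith)
    have h2 : Real.sqrt (9 * α) = 3 * sa := by
      rw [show (9:ℝ) * α = 3 ^ 2 * α by norm_num,
        Real.sqrt_mul (by positivity), Real.sqrt_sq (by norm_num : (0:ℝ) ≤ 3), hsadef]
    linarith [h1, h2.le, h2.ge]
  have hkey : 2 + s8 ≤ 5 * sa := by linarith [hsa1, hs8le]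
  -- combine
  set T := Ct / (sk * sL) with hTdef
  have hT0 : 0 ≤ T := by positivity
  have hB1 : Ct / (Real.sqrt (d * k) * L) ≤ T := by
    rw [hTdef]
    apply div_le_div_of_nonneg_left hCt0.le (by positivity)
    calc sk * sL ≤ sk * L := mul_le_mul_of_nonneg_left hsLleL hsk0.le
      _ ≤ Real.sqrt (d * k) * L := mul_le_mul_of_nonneg_right hsdk hL0.le
  have hB2 : (Ct / (sk * L)) * Real.sqrt (8 * α * L) = s8 * T := by
    rw [hs8, hTdef, ← hsLsq]
    field_simp
  have hRHS : 5 * sa * Ct / Real.sqrt (k * L) = 5 * sa * T := by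
    rw [hTdef, hskdef, hsLdef, ← Real.sqrt_mul hk0.le]
    field_simp
  rw [hRHS]
  calc |(∑ l, w l * x l) - (t : ℝ) * η * v * y / 2|
      = |(w ⟨0, by omega⟩ * x ⟨0, by omega⟩ - (t : ℝ) * η * v * y / 2)
          + w ⟨1, by omega⟩ * x ⟨1, by omega⟩ + noiseDot d w x| := by
        rw [hsplit]; ring_nf
    _ ≤ |w ⟨0, by omega⟩ * x ⟨0, by omega⟩ - (t : ℝ) * η * v * y / 2|
          + |w ⟨1, by omega⟩ * x ⟨1, by omega⟩| + |noiseDot d w x| := by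
        exact (abs_add_le _ _).trans (by gcongr; exact abs_add_le _ _)
    _ ≤ T + T + s8 * T := by
        rw [← hB2]
        exact add_le_add (add_le_add (hterm0.trans hB1) (hterm1.trans hB1)) hterm2
    _ = (2 + s8) * T := by ring
    _ ≤ 5 * sa * T := mul_le_mul_of_nonneg_right hkey hT0

end
end

section
/- Let n ≥ 2, p ∈ [0,1], k ∈ ℝ, and let (b_i, Z_i), i = 1,…,n, be i.i.d. pairs of independent random variables with b_i ~ Bernoulli(p) and Z_i ~ N(0,1). Set X_i = b_i · 1{Z_i ≥ k} · Z_i and X̄ = (1/n) Σ_{i=1}^n X_i. Then P(|X̄ − p·φ(k)| ≤ √(2/n) · log n) ≥ 1 − 4/n, where φ(k) = (1/√(2π)) exp(−k²/2) is the standard normal density at k. -/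
open MeasureTheory ProbabilityTheory
open scoped ENNReal

noncomputable section

/-- The standard normal probability density function. -/
def stdphi (t : ℝ) : ℝ := (Real.sqrt (2 * Real.pi))⁻¹ * Real.exp (-(t ^ 2) / 2)

/-!
The key observation is that thinning a random variable cannot increase `e^{tY} - 1 - tY`: since
`X = 1{b = 1, Z ≥ k} · Z` equals `Z` or `0`, we get `e^{tX} - 1 - tX ≤ e^{tZ} - 1 - tZ`
pointwise, hence `E e^{tX} ≤ t E X + E e^{tZ} = t p φ(k) + e^{t²/2} ≤ exp (t p φ(k) + t²)`
for `t² ≤ 2`. With this sub-Gaussian bound on the moment generating function, the Chernoff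
bound at `t = ±ε/2`, for `ε = √(2/n) log n ≤ 2√2`, bounds each tail by `exp (-(log n)² / 2)`,
which is at most `2 / n`.
-/

open Real Set
open scoped NNReal

lemma exp_sq_div_two_le_one_add_sq {t : ℝ} (ht : t ^ 2 ≤ 2) : exp (t ^ 2 / 2) ≤ 1 + t ^ 2 := by
  -- `|e^x - 1 - x| ≤ 3 x² / 4` for `|x| ≤ 1`
  have h := Real.exp_bound (x := t ^ 2 / 2) (by rw [abs_of_nonneg (by positivity)]; linarith)
    (n := 2) two_pos
  simp only [Finset.sum_range_succ, Finset.sum_range_zero] at h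
  norm_num [abs_le] at h
  nlinarith [sq_nonneg t]

lemma sqrt_two_div_mul_log_le {x : ℝ} (hx : 0 < x) : √(2 / x) * log x ≤ 2 * √2 := by
  have hlog : log x ≤ 2 * √x := by
    have h := log_le_rpow_div hx.le (by norm_num : (0 : ℝ) < 1 / 2)
    rw [← sqrt_eq_rpow] at h
    linarith
  calc √(2 / x) * log x ≤ √(2 / x) * (2 * √x) := by gcongr
    _ = 2 * √(2 / x * x) := by rw [sqrt_mul (by positivity)]; ring
    _ = 2 * √2 := by rw [div_mul_cancel₀ _ hx.ne']

lemma exp_neg_sq_log_div_two_le {x : ℝ} (hx : 0 < x) : exp (-(log x ^ 2 / 2)) ≤ 2 / x := by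
  rw [show 2 / x = exp (log 2 - log x) by rw [exp_sub, exp_log two_pos, exp_log hx], exp_le_exp]
  nlinarith [sq_nonneg (log x - 1), log_two_gt_d9]

lemma exp_mul_indicator_le {Ω : Type*} (t : ℝ) (Z : Ω → ℝ) (s : Set Ω) (ω : Ω) :
    exp (t * s.indicator Z ω) ≤ t * s.indicator Z ω + (exp (t * Z ω) - t * Z ω) := by
  by_cases hω : ω ∈ s
  · simp [hω]
  · simp only [hω, not_false_eq_true, indicator_of_notMem, mul_zero, exp_zero, zero_add]
    linarith [add_one_le_exp (t * Z ω)]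

section Thinning

variable {Ω : Type*} [MeasurableSpace Ω] {μ : Measure Ω} {Z : Ω → ℝ} {s : Set Ω} {t : ℝ}

lemma integrable_exp_mul_indicator [IsFiniteMeasure μ] (hs : MeasurableSet s)
    (hZ : AEMeasurable Z μ) (h_int : Integrable (fun ω ↦ exp (t * Z ω)) μ) :
    Integrable (fun ω ↦ exp (t * s.indicator Z ω)) μ := by
  refine (h_int.add (integrable_const 1)).mono'
    ((hZ.indicator hs).const_mul t).exp.aestronglyMeasurable (ae_of_all _ fun ω ↦ ?_)
  rw [norm_of_nonneg (exp_pos _).le]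
  by_cases hω : ω ∈ s <;> simp [hω, (exp_pos _).le]

lemma mgf_indicator_le (hs : MeasurableSet s) (hZ : Integrable Z μ)
    (h_int : Integrable (fun ω ↦ exp (t * Z ω)) μ) :
    mgf (s.indicator Z) μ t ≤ t * μ[s.indicator Z] + (mgf Z μ t - t * μ[Z]) := by
  have hsZ : Integrable (fun ω ↦ t * s.indicator Z ω) μ := (hZ.indicator hs).const_mul t
  have hrest : Integrable (fun ω ↦ exp (t * Z ω) - t * Z ω) μ := h_int.sub (hZ.const_mul t)
  calc mgf (s.indicator Z) μ t
      ≤ ∫ ω, t * s.indicator Z ω + (exp (t * Z ω) - t * Z ω) ∂μ :=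
        integral_mono_of_nonneg (ae_of_all _ fun _ ↦ (exp_pos _).le) (hsZ.add hrest)
          (ae_of_all _ (exp_mul_indicator_le t Z s))
    _ = t * μ[s.indicator Z] + (mgf Z μ t - t * μ[Z]) := by
        rw [integral_add hsZ hrest, integral_sub h_int (hZ.const_mul t), integral_const_mul,
          integral_const_mul, mgf]

end Thinning

lemma gaussianPDFReal_zero_one : gaussianPDFReal 0 1 = stdphi := by
  ext x; simp [gaussianPDFReal, stdphi]

lemma hasDerivAt_stdphi (x : ℝ) : HasDerivAt stdphi (-(x * stdphi x)) x := by
  have h : HasDerivAt (fun y : ℝ ↦ -(y ^ 2) / 2) (-x) x :=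
    ((hasDerivAt_pow 2 x).neg.div_const 2).congr_deriv (by push_cast; ring)
  exact (h.exp.const_mul (√(2 * π))⁻¹).congr_deriv (by rw [stdphi]; ring)

lemma tendsto_stdphi_atTop : Filter.Tendsto stdphi Filter.atTop (nhds 0) := by
  have : Filter.Tendsto (fun x : ℝ ↦ -(x ^ 2) / 2) Filter.atTop Filter.atBot :=
    (Filter.tendsto_neg_atTop_atBot.comp (Filter.tendsto_pow_atTop two_ne_zero)).atBot_div_const
      two_pos
  unfold stdphi
  simpa only [mul_zero, Function.comp_def] using
    (tendsto_exp_atBot.comp this).const_mul (√(2 * π))⁻¹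

lemma setIntegral_Ici_gaussianReal (k : ℝ) : ∫ x in Ici k, x ∂gaussianReal 0 1 = stdphi k := by
  have h_int : IntegrableOn (fun x ↦ x * stdphi x) (Ioi k) := by
    refine ((integrable_mul_exp_neg_mul_sq (b := 1 / 2) (by norm_num)).const_mul
      (√(2 * π))⁻¹).integrableOn.congr_fun (fun x _ ↦ ?_) measurableSet_Ioi
    simp only [stdphi]; ring_nf
  have h_ind : (fun x ↦ stdphi x • (Ici k).indicator (fun x ↦ x) x)
      = (Ici k).indicator (fun x ↦ x * stdphi x) := by
    ext x
    by_cases hx : x ∈ Ici k <;> simp [hx, mul_comm]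
  rw [← integral_indicator measurableSet_Ici, integral_gaussianReal_eq_integral_smul one_ne_zero,
    gaussianPDFReal_zero_one, h_ind, integral_indicator measurableSet_Ici,
    integral_Ici_eq_integral_Ioi,
    integral_Ioi_of_hasDerivAt_of_tendsto' (f := fun x ↦ -stdphi x)
      (fun x _ ↦ by simpa using (hasDerivAt_stdphi x).fun_neg) h_int
      (by simpa using tendsto_stdphi_atTop.neg)]
  ring

namespace ProbabilityTheory.HasLaw

variable {Ω : Type*} [MeasurableSpace Ω] {μ : Measure Ω} {Z : Ω → ℝ} {s : Set Ω} {t : ℝ}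

lemma integrable_of_gaussianReal (hZ : HasLaw Z (gaussianReal 0 1) μ) : Integrable Z μ := by
  have h : Integrable id (gaussianReal 0 1) := (memLp_id_gaussianReal 1).integrable le_rfl
  rw [← hZ.map_eq] at h
  exact (integrable_map_measure aestronglyMeasurable_id hZ.aemeasurable).mp h

lemma mgf_of_gaussianReal (hZ : HasLaw Z (gaussianReal 0 1) μ) (t : ℝ) :
    mgf Z μ t = exp (t ^ 2 / 2) := by
  simp [mgf_gaussianReal hZ.map_eq]

lemma integrable_exp_mul_of_gaussianReal (hZ : HasLaw Z (gaussianReal 0 1) μ) (t : ℝ) :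
    Integrable (fun ω ↦ exp (t * Z ω)) μ := by
  have := hZ.isProbabilityMeasure
  rw [← mgf_pos_iff, hZ.mgf_of_gaussianReal]
  exact exp_pos _

lemma integrable_exp_mul_indicator_of_gaussianReal (hZ : HasLaw Z (gaussianReal 0 1) μ)
    (hs : MeasurableSet s) (t : ℝ) :
    Integrable (fun ω ↦ exp (t * s.indicator Z ω)) μ :=
  have := hZ.isProbabilityMeasure
  integrable_exp_mul_indicator hs hZ.aemeasurable (hZ.integrable_exp_mul_of_gaussianReal t)

lemma mgf_indicator_le_of_gaussianReal (hZ : HasLaw Z (gaussianReal 0 1) μ)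
    (hs : MeasurableSet s) (ht : |t| ≤ √2) :
    mgf (s.indicator Z) μ t ≤ exp (t * μ[s.indicator Z] + t ^ 2) := by
  have ht2 : t ^ 2 ≤ 2 := by
    simpa [sq_abs] using pow_le_pow_left₀ (abs_nonneg t) ht 2
  calc mgf (s.indicator Z) μ t
      ≤ t * μ[s.indicator Z] + (mgf Z μ t - t * μ[Z]) :=
        mgf_indicator_le hs hZ.integrable_of_gaussianReal
          (hZ.integrable_exp_mul_of_gaussianReal t)
    _ ≤ t * μ[s.indicator Z] + t ^ 2 + 1 := by
        rw [hZ.mgf_of_gaussianReal, hZ.integral_eq, integral_id_gaussianReal]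
        linarith [exp_sq_div_two_le_one_add_sq ht2]
    _ ≤ exp (t * μ[s.indicator Z] + t ^ 2) := add_one_le_exp _

end ProbabilityTheory.HasLaw

namespace ProbabilityTheory.iIndepFun

variable {Ω ι : Type*} [MeasurableSpace Ω] {μ : Measure Ω} [Fintype ι] {X : ι → Ω → ℝ}
  {m c t : ℝ}

lemma mgf_sum_le (h_indep : iIndepFun X μ) (h_meas : ∀ i, Measurable (X i))
    (h_mgf : ∀ i, mgf (X i) μ t ≤ exp (t * m + c * t ^ 2)) :
    mgf (∑ i, X i) μ t ≤ exp (Fintype.card ι * (t * m + c * t ^ 2)) := by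
  rw [h_indep.mgf_sum h_meas, exp_nat_mul, ← Finset.card_univ, ← Finset.prod_const]
  exact Finset.prod_le_prod (fun _ _ ↦ mgf_nonneg) (fun i _ ↦ h_mgf i)

lemma measureReal_lt_abs_mean_sub_le [IsProbabilityMeasure μ] [Nonempty ι]
    (h_indep : iIndepFun X μ) (h_meas : ∀ i, Measurable (X i)) {R ε : ℝ} (hc : 0 < c)
    (hε : 0 ≤ ε) (hεR : ε ≤ 2 * c * R)
    (h_int : ∀ i t, |t| ≤ R → Integrable (fun ω ↦ exp (t * X i ω)) μ)
    (h_mgf : ∀ i t, |t| ≤ R → mgf (X i) μ t ≤ exp (t * m + c * t ^ 2)) :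
    μ.real {ω | ε < |(1 / Fintype.card ι : ℝ) * ∑ i, X i ω - m|}
      ≤ 2 * exp (-(Fintype.card ι * ε ^ 2 / (4 * c))) := by
  set N : ℝ := (Fintype.card ι : ℝ)
  have hN : 0 < N := by positivity
  -- `t₀` minimises the Chernoff exponent `N (c t² - t ε)`
  set t₀ := ε / (2 * c)
  have ht₀ : |t₀| ≤ R := by
    rw [abs_of_nonneg (by positivity), div_le_iff₀ (by positivity)]; linarith
  have h_sum_int : ∀ t, |t| ≤ R → Integrable (fun ω ↦ exp (t * (∑ i, X i) ω)) μ :=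
    fun t ht ↦ h_indep.integrable_exp_mul_sum h_meas fun i _ ↦ h_int i t ht
  have h_sum_mgf : ∀ t, |t| ≤ R → mgf (∑ i, X i) μ t ≤ exp (N * (t * m + c * t ^ 2)) :=
    fun t ht ↦ h_indep.mgf_sum_le h_meas fun i ↦ h_mgf i t ht
  have upper : μ.real {ω | N * m + N * ε ≤ (∑ i, X i) ω} ≤ exp (-(N * ε ^ 2 / (4 * c))) := by
    refine (measure_ge_le_exp_mul_mgf _ (by positivity) (h_sum_int t₀ ht₀)).trans ?_
    refine (mul_le_mul_of_nonneg_left (h_sum_mgf t₀ ht₀) (exp_pos _).le).trans_eq ?_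
    rw [← exp_add]; congr 1; simp only [t₀]; field_simp; ring
  have lower : μ.real {ω | (∑ i, X i) ω ≤ N * m - N * ε} ≤ exp (-(N * ε ^ 2 / (4 * c))) := by
    have ht₀' : |-t₀| ≤ R := by rwa [abs_neg]
    refine (measure_le_le_exp_mul_mgf _ (by simp; positivity) (h_sum_int _ ht₀')).trans ?_
    refine (mul_le_mul_of_nonneg_left (h_sum_mgf _ ht₀') (exp_pos _).le).trans_eq ?_
    rw [← exp_add]; congr 1; simp only [t₀]; field_simp; ring
  have h_sub : {ω | ε < |(1 / N) * ∑ i, X i ω - m|}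
      ⊆ {ω | N * m + N * ε ≤ (∑ i, X i) ω} ∪ {ω | (∑ i, X i) ω ≤ N * m - N * ε} := by
    intro ω hω
    simp only [mem_ofPred_eq, Finset.sum_apply, mem_union] at hω ⊢
    have h_mean : N * ((1 / N) * ∑ i, X i ω - m) = ∑ i, X i ω - N * m := by field_simp
    rcases lt_abs.mp hω with h | h
    · left
      linarith [mul_lt_mul_of_pos_left h hN]
    · right
      linarith [mul_lt_mul_of_pos_left h hN]
  calc μ.real {ω | ε < |(1 / N) * ∑ i, X i ω - m|}
      ≤ μ.real {ω | N * m + N * ε ≤ (∑ i, X i) ω} + μ.real {ω | (∑ i, X i) ω ≤ N * m - N * ε} :=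
        (measureReal_mono h_sub).trans (measureReal_union_le _ _)
    _ ≤ 2 * exp (-(N * ε ^ 2 / (4 * c))) := by linarith

end ProbabilityTheory.iIndepFun

lemma le_measureReal_pi_abs_mean_sub_le {α ι : Type*} [MeasurableSpace α] {ν : Measure α}
    [IsProbabilityMeasure ν] [Fintype ι] [Nonempty ι] {f : α → ℝ} (hf : Measurable f)
    {m c R ε : ℝ} (hc : 0 < c) (hε : 0 ≤ ε) (hεR : ε ≤ 2 * c * R)
    (h_int : ∀ t, |t| ≤ R → Integrable (fun x ↦ exp (t * f x)) ν)
    (h_mgf : ∀ t, |t| ≤ R → mgf f ν t ≤ exp (t * m + c * t ^ 2)) :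
    1 - 2 * exp (-(Fintype.card ι * ε ^ 2 / (4 * c)))
      ≤ (Measure.pi fun _ : ι ↦ ν).real
          {ω | |(1 / Fintype.card ι : ℝ) * ∑ i, f (ω i) - m| ≤ ε} := by
  have h_eval (i : ι) : MeasurePreserving (fun ω : ι → α ↦ ω i) (Measure.pi fun _ ↦ ν) ν :=
    measurePreserving_eval (fun _ ↦ ν) i
  have h_tail := (iIndepFun_pi (X := fun _ ↦ f) fun _ ↦ hf.aemeasurable)
    |>.measureReal_lt_abs_mean_sub_le (fun i ↦ hf.comp (measurable_pi_apply i)) hc hε hεR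
      (fun i t ht ↦ (h_eval i).integrable_comp_of_integrable (h_int t ht))
      (fun i t ht ↦ ((h_eval i).hasLaw.integral_comp (by fun_prop)).trans_le (h_mgf t ht))
  have h_meas : MeasurableSet {ω : ι → α | |(1 / Fintype.card ι : ℝ) * ∑ i, f (ω i) - m| ≤ ε} :=
    measurableSet_le (by fun_prop) measurable_const
  have h_compl := probReal_compl_eq_one_sub (μ := Measure.pi fun _ : ι ↦ ν) h_meas
  simp only [compl_ofPred, not_le] at h_compl
  linarith

section BernoulliGaussian

variable (q : ℝ≥0) (hq : q ≤ 1) (k : ℝ)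

lemma ite_mul_ite_mul_eq_indicator (ω : Bool × ℝ) :
    (if ω.1 then (1 : ℝ) else 0) * (if k ≤ ω.2 then (1 : ℝ) else 0) * ω.2
      = ({true} ×ˢ Ici k).indicator Prod.snd ω := by
  obtain ⟨b, z⟩ := ω
  by_cases hz : k ≤ z <;> cases b <;> simp [hz]

lemma integral_indicator_snd_bernoulli_prod_gaussianReal :
    ∫ ω, ({true} ×ˢ Ici k).indicator Prod.snd ω
        ∂(PMF.bernoulli q hq).toMeasure.prod (gaussianReal 0 1) = q * stdphi k := by
  have h := setIntegral_prod_mul (μ := (PMF.bernoulli q hq).toMeasure) (ν := gaussianReal 0 1)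
    (fun _ ↦ (1 : ℝ)) (fun y ↦ y) {true} (Ici k)
  simp only [one_mul, setIntegral_const, smul_eq_mul, mul_one] at h
  rw [integral_indicator ((measurableSet_singleton _).prod measurableSet_Ici), h,
    setIntegral_Ici_gaussianReal]
  simp [measureReal_def, PMF.bernoulli_apply]

end BernoulliGaussian

/-- for i.i.d. pairs `(b i, Z i)` with `b i ~ Bernoulli(p)` and `Z i ~ N(0,1)`
independent, and `X̄ = (1/n) Σ b i · 1{Z i ≥ k} · Z i`, we have
`P(|X̄ - p φ(k)| ≤ √(2/n) · log n) ≥ 1 - 4/n`. -/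
theorem bernoulli_truncated_gaussian_concentration (n : ℕ) (hn : 2 ≤ n) (p : ℝ)
    (hp0 : 0 ≤ p) (hp1 : p ≤ 1) (k : ℝ) :
    ENNReal.ofReal (1 - 4 / n) ≤
      (Measure.pi fun _ : Fin n =>
          ((PMF.bernoulli (Real.toNNReal p) (Real.toNNReal_le_one.mpr hp1)).toMeasure).prod
            (gaussianReal 0 1))
        {ω | |(1 / n : ℝ) * ∑ i, (if (ω i).1 then (1 : ℝ) else 0) *
              (if k ≤ (ω i).2 then (1 : ℝ) else 0) * (ω i).2 - p * stdphi k|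
            ≤ Real.sqrt (2 / n) * Real.log n} := by
  set ν := (PMF.bernoulli p.toNNReal (toNNReal_le_one.mpr hp1)).toMeasure.prod (gaussianReal 0 1)
  set s : Set (Bool × ℝ) := {true} ×ˢ Ici k
  have hs : MeasurableSet s := (measurableSet_singleton _).prod measurableSet_Ici
  have hZ : HasLaw Prod.snd (gaussianReal 0 1) ν := measurePreserving_snd.hasLaw
  have h_mean : ν[s.indicator Prod.snd] = p * stdphi k := by
    rw [integral_indicator_snd_bernoulli_prod_gaussianReal, coe_toNNReal _ hp0]
  have hn0 : (0 : ℝ) < n := by positivity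
  have : Nonempty (Fin n) := ⟨⟨0, by omega⟩⟩
  have h_tail := le_measureReal_pi_abs_mean_sub_le (ι := Fin n) (ν := ν)
    (measurable_snd.indicator hs) one_pos
    (mul_nonneg (sqrt_nonneg _) (log_nonneg (by exact_mod_cast (by omega : 1 ≤ n))))
    ((sqrt_two_div_mul_log_le hn0).trans_eq (by ring))
    (fun t _ ↦ hZ.integrable_exp_mul_indicator_of_gaussianReal hs t)
    (fun t ht ↦ by simpa [h_mean] using hZ.mgf_indicator_le_of_gaussianReal hs ht)
  have h_exp : 2 * exp (-(n * (√(2 / n) * log n) ^ 2 / (4 * 1))) ≤ 4 / n := by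
    rw [mul_pow, sq_sqrt (by positivity), show n * (2 / n * log n ^ 2) / (4 * 1) = log n ^ 2 / 2
      by field_simp; ring]
    linarith [exp_neg_sq_log_div_two_le hn0, show (4 : ℝ) / n = 2 * (2 / n) by ring]
  simp only [ite_mul_ite_mul_eq_indicator]
  rw [Fintype.card_fin] at h_tail
  rw [← ofReal_measureReal]
  exact ENNReal.ofReal_le_ofReal (by linarith)

end
end
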